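/- Fix real constants σ and n and a sign ε = ±1. Let τ > 0, h > 0, let u, u₊, u₋ > 0 and û ∈ ℝ satisfy the explicit difference scheme (û - u)/τ = (1/h)·[ ((u₊+u)/2)^σ·(u₊-u)/h − ((u+u₋)/2)^σ·(u-u₋)/h ] + ε·uⁿ. Then for every λ > 0 the scaled values τ* = λ^{2(n-1)}τ, h* = λ^{n-σ-1}h, u* = λ⁻²u, u₊* = λ⁻²u₊, u₋* = λ⁻²u₋, û* = λ⁻²û satisfy the same scheme. That is, the explicit scheme is invariant under the scaling subgroup generated by X₃ = 2(n-1)t∂/∂t + (n-σ-1)x∂/∂x − 2u∂/∂u admitted by the PDE u_t = (u^σ u_x)_x ± uⁿ. -/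

import Mathlib

open Real

/-- `up`, `um`, `uh` stand for `u₊`, `u₋`, `û`. -/
def ExplicitScheme (σ n eps τ h u up um uh : ℝ) : Prop :=
  (uh - u) / τ
    = (1 / h) * (((up + u) / 2) ^ σ * (up - u) / h - ((u + um) / 2) ^ σ * (u - um) / h)
      + eps * u ^ n

lemma half_sum_mul_rpow {c v w : ℝ} (hc : 0 ≤ c) (hv : 0 ≤ v) (hw : 0 ≤ w) (σ : ℝ) :
    ((c * v + c * w) / 2) ^ σ = c ^ σ * ((v + w) / 2) ^ σ := by
  rw [← mul_add, mul_div_assoc, mul_rpow hc (by positivity)]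

/-- Scaling `u` by `c`, `τ` by `s` and `h` by `k` multiplies the time difference quotient by `c / s`,
the diffusion term by `c^(σ+1) / k²` and the source term by `cⁿ`; the scheme survives when all
three factors agree. -/
theorem ExplicitScheme.scale {σ n eps τ h u up um uh c s k : ℝ} (hc : 0 < c)
    (hu : 0 ≤ u) (hup : 0 ≤ up) (hum : 0 ≤ um)
    (hs : c / s = c ^ n) (hk : c ^ (σ + 1) / k ^ 2 = c ^ n)
    (H : ExplicitScheme σ n eps τ h u up um uh) :
    ExplicitScheme σ n eps (s * τ) (k * h) (c * u) (c * up) (c * um) (c * uh) := by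
  unfold ExplicitScheme at H ⊢
  rw [half_sum_mul_rpow hc.le hup hu, half_sum_mul_rpow hc.le hu hum, mul_rpow hc.le hu]
  have time : (c * uh - c * u) / (s * τ) = c / s * ((uh - u) / τ) := by ring
  have diffusion : (1 / (k * h)) * (c ^ σ * ((up + u) / 2) ^ σ * (c * up - c * u) / (k * h)
        - c ^ σ * ((u + um) / 2) ^ σ * (c * u - c * um) / (k * h))
      = c ^ (σ + 1) / k ^ 2
        * ((1 / h) * (((up + u) / 2) ^ σ * (up - u) / h - ((u + um) / 2) ^ σ * (u - um) / h)) := by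
    rw [rpow_add_one hc.ne']
    ring
  rw [time, diffusion, hs, hk, H]
  ring

theorem explicit_scheme_nonlinear_heat_scaling_invariant
    (σ n eps : ℝ)
    (τ h u up um uh : ℝ)
    (hu : 0 < u) (hup : 0 < up) (hum : 0 < um)
    (hscheme : (uh - u) / τ
      = (1 / h) * (((up + u) / 2) ^ σ * (up - u) / h
          - ((u + um) / 2) ^ σ * (u - um) / h) + eps * u ^ n)
    (lam : ℝ) (hlam : 0 < lam) :
    (lam ^ (-2 : ℝ) * uh - lam ^ (-2 : ℝ) * u) / (lam ^ (2 * (n - 1)) * τ)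
      = (1 / (lam ^ (n - σ - 1) * h))
          * (((lam ^ (-2 : ℝ) * up + lam ^ (-2 : ℝ) * u) / 2) ^ σ
                * (lam ^ (-2 : ℝ) * up - lam ^ (-2 : ℝ) * u) / (lam ^ (n - σ - 1) * h)
              - ((lam ^ (-2 : ℝ) * u + lam ^ (-2 : ℝ) * um) / 2) ^ σ
                * (lam ^ (-2 : ℝ) * u - lam ^ (-2 : ℝ) * um) / (lam ^ (n - σ - 1) * h))
        + eps * (lam ^ (-2 : ℝ) * u) ^ n := by
  refine ExplicitScheme.scale (rpow_pos_of_pos hlam _) hu.le hup.le hum.le ?_ ?_ hscheme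
  · rw [← rpow_sub hlam, ← rpow_mul hlam.le]
    ring_nf
  · rw [← rpow_mul hlam.le, ← rpow_mul_natCast hlam.le, ← rpow_sub hlam, ← rpow_mul hlam.le]
    ring_nf
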